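/- Every Jordan block J(λ, n) with |λ| = 1 is strongly c-reversible in GL(n, ℂ): there exists an upper triangular matrix B with B * conj(B) = I and B J(λ,n) B⁻¹ = (conj J(λ,n))⁻¹. -/

import Mathlib

/-!
Conjugating by `D = diag(μ ^ i)` with `μ = conj λ` turns `J(λ)` and `conj J(λ) = J(μ)` into
scalar multiples of the unipotent block `J(1)`, which reduces the problem to `λ = 1`. There
the signed Pascal matrix `P i j = (-1) ^ j * C(j, i)` works: it is the matrix of
`p(x) ↦ p(-1 - x)` in the binomial basis `C(x, k)` of polynomials of degree `< n`, an
involution conjugating the shift `p(x) ↦ p(x + 1)`, whose matrix is `J(1)`, to its inverse.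
Then `B = D P D` is upper triangular, `B * conj B = D P P (conj D) = 1` and
`J(μ) B J(λ) = B`.
-/

open Matrix

def jordanBlock (lam : ℂ) (n : ℕ) : Matrix (Fin n) (Fin n) ℂ :=
  Matrix.of fun i j => if (j : ℕ) = i then lam else if (j : ℕ) = i + 1 then 1 else 0

open Finset

theorem sum_range_neg_one_pow_mul_choose_mul_choose (k i : ℕ) :
    ∑ j ∈ range (k + 1), ((-1) ^ j * k.choose j * j.choose i : ℤ) =
      if k = i then (-1) ^ i else 0 := by
  rcases lt_or_ge k i with hki | hik
  · rw [if_neg hki.ne]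
    refine sum_eq_zero fun j hj => ?_
    rw [Nat.choose_eq_zero_of_lt (n := j) (by simp at hj; omega), Nat.cast_zero, mul_zero]
  have hshift : ∑ j ∈ range (k + 1), ((-1) ^ j * k.choose j * j.choose i : ℤ) =
      ∑ t ∈ range (k - i + 1),
        ((-1) ^ (i + t) * k.choose (i + t) * (i + t).choose i : ℤ) := by
    rw [show k + 1 = i + (k - i + 1) by omega, sum_range_add, add_eq_right]
    refine sum_eq_zero fun j hj => ?_
    rw [Nat.choose_eq_zero_of_lt (n := j) (by simpa using hj), Nat.cast_zero, mul_zero]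
  have hterm : ∀ t ∈ range (k - i + 1),
      ((-1) ^ (i + t) * k.choose (i + t) * (i + t).choose i : ℤ) =
        (-1) ^ i * k.choose i * ((-1) ^ t * (k - i).choose t) := by
    intro t _
    have := Nat.choose_mul (n := k) (k := i + t) (s := i) (by omega)
    rw [Nat.add_sub_cancel_left] at this
    rw [pow_add, mul_assoc, ← Nat.cast_mul, this]
    push_cast
    ring
  rw [hshift, sum_congr rfl hterm, ← mul_sum, Int.alternating_sum_range_choose]
  rcases hik.eq_or_lt with rfl | hlt
  · simp
  · simp [hlt.ne', Nat.sub_eq_zero_iff_le, hlt.not_ge]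

def signedPascal (R : Type*) [Ring R] (n : ℕ) : Matrix (Fin n) (Fin n) R :=
  of fun i j => (-1) ^ (j : ℕ) * ((j : ℕ).choose i : R)

section signedPascal

variable {R S : Type*} [Ring R] [Ring S] {n : ℕ}

theorem signedPascal_map (f : R →+* S) : (signedPascal R n).map f = signedPascal S n := by
  ext i j
  simp [signedPascal]

theorem signedPascal_blockTriangular : (signedPascal R n).BlockTriangular id := by
  intro i j hji
  simp [signedPascal, Nat.choose_eq_zero_of_lt (show (j : ℕ) < i from hji)]

theorem signedPascal_int_mul_self : signedPascal ℤ n * signedPascal ℤ n = 1 := by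
  ext i k
  have hk : (k : ℕ) + 1 ≤ n := k.isLt
  let f : ℕ → ℤ := fun j => (-1) ^ j * j.choose i * ((-1) ^ (k : ℕ) * (k : ℕ).choose j)
  have hvanish : ∀ j ∈ range n, j ∉ range ((k : ℕ) + 1) → f j = 0 := fun j _ hj => by
    simp [f, Nat.choose_eq_zero_of_lt (by simpa using hj : (k : ℕ) < j)]
  calc (signedPascal ℤ n * signedPascal ℤ n) i k = ∑ j ∈ range n, f j :=
        Fin.sum_univ_eq_sum_range f n
    _ = ∑ j ∈ range ((k : ℕ) + 1), f j :=
        (sum_subset (range_subset_range.2 hk) hvanish).symm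
    _ = (-1) ^ (k : ℕ) *
          ∑ j ∈ range ((k : ℕ) + 1), ((-1) ^ j * (k : ℕ).choose j * j.choose i : ℤ) := by
        rw [mul_sum]; exact sum_congr rfl fun j _ => by ring
    _ = (1 : Matrix (Fin n) (Fin n) ℤ) i k := by
        rw [sum_range_neg_one_pow_mul_choose_mul_choose, one_apply]
        by_cases hik : i = k
        · subst hik; simp [← mul_pow]
        · simp [hik, Fin.val_ne_of_ne (Ne.symm hik)]

theorem signedPascal_mul_self : signedPascal R n * signedPascal R n = 1 := by
  rw [← signedPascal_map (Int.castRingHom R), ← Matrix.map_mul, signedPascal_int_mul_self,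
    Matrix.map_one _ (map_zero _) (map_one _)]

end signedPascal

theorem Fin.sum_univ_ite_val_eq {M : Type*} [AddCommMonoid M] {n : ℕ} (f : Fin n → M)
    (v : ℕ) :
    ∑ l : Fin n, (if (l : ℕ) = v then f l else 0) = if h : v < n then f ⟨v, h⟩ else 0 := by
  split_ifs with h
  · simpa [Fin.ext_iff] using Fintype.sum_ite_eq' (⟨v, h⟩ : Fin n) f
  · exact sum_eq_zero fun l _ => if_neg fun hl : (l : ℕ) = v => h (hl ▸ l.isLt)

section jordanBlock

variable {n : ℕ}

theorem jordanBlock_map (f : ℂ →+* ℂ) (a : ℂ) :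
    (jordanBlock a n).map f = jordanBlock (f a) n := by
  ext i j
  simp only [jordanBlock, map_apply, of_apply]
  split_ifs <;> simp

theorem jordanBlock_mul_apply (a : ℂ) (M : Matrix (Fin n) (Fin n) ℂ) (i k : Fin n) :
    (jordanBlock a n * M) i k =
      a * M i k + if h : (i : ℕ) + 1 < n then M ⟨i + 1, h⟩ k else 0 := by
  have hsplit : ∀ j : Fin n, jordanBlock a n i j * M j k =
      (if (j : ℕ) = i then a * M j k else 0) + (if (j : ℕ) = i + 1 then M j k else 0) := by
    intro j
    simp only [jordanBlock, of_apply]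
    split_ifs <;> first | ring1 | omega
  rw [mul_apply, sum_congr rfl fun j _ => hsplit j, sum_add_distrib, Fin.sum_univ_ite_val_eq,
    Fin.sum_univ_ite_val_eq (fun j => M j k), dif_pos i.isLt]

theorem mul_jordanBlock_apply (a : ℂ) (M : Matrix (Fin n) (Fin n) ℂ) (i k : Fin n) :
    (M * jordanBlock a n) i k =
      M i k * a + if h : 0 < (k : ℕ) then M i ⟨k - 1, by omega⟩ else 0 := by
  have hsplit : ∀ j : Fin n, M i j * jordanBlock a n j k =
      (if (j : ℕ) = k then M i j * a else 0) +
        (if (j : ℕ) = k - 1 then (if 0 < (k : ℕ) then M i j else 0) else 0) := by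
    intro j
    simp only [jordanBlock, of_apply]
    split_ifs <;> first | ring1 | omega
  rw [mul_apply, sum_congr rfl fun j _ => hsplit j, sum_add_distrib, Fin.sum_univ_ite_val_eq,
    Fin.sum_univ_ite_val_eq, dif_pos k.isLt, dif_pos (by omega)]
  split_ifs <;> rfl

theorem jordanBlock_mul_diagonal_pow (c a : ℂ) :
    jordanBlock (c * a) n * diagonal (fun i : Fin n => c ^ (i : ℕ)) =
      c • (diagonal (fun i : Fin n => c ^ (i : ℕ)) * jordanBlock a n) := by
  ext i j
  simp only [jordanBlock, mul_diagonal, diagonal_mul, Matrix.smul_apply, of_apply, smul_eq_mul]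
  split_ifs with h₁ h₂
  · rw [h₁]; ring
  · rw [h₂, pow_succ]; ring
  · simp

theorem jordanBlock_one_mul_signedPascal_mul_jordanBlock_one :
    jordanBlock 1 n * signedPascal ℂ n * jordanBlock 1 n = signedPascal ℂ n := by
  ext i k
  simp only [mul_jordanBlock_apply, jordanBlock_mul_apply, one_mul, mul_one]
  split_ifs with hi hk hk
  · obtain ⟨s, hs⟩ : ∃ s, (k : ℕ) = s + 1 := ⟨k - 1, by omega⟩
    simp only [signedPascal, of_apply, hs, Nat.add_sub_cancel, Nat.choose_succ_succ, pow_succ]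
    push_cast
    ring
  · simp [signedPascal, show (k : ℕ) = 0 by omega]
  · simp [signedPascal, Nat.choose_eq_zero_of_lt (show (k : ℕ) - 1 < i by omega)]
  · simp only [add_zero]

end jordanBlock

noncomputable def jordanReverser (c : ℂ) (n : ℕ) : Matrix (Fin n) (Fin n) ℂ :=
  diagonal (fun i : Fin n => c ^ (i : ℕ)) * signedPascal ℂ n *
    diagonal (fun i : Fin n => c ^ (i : ℕ))

section jordanReverser

variable {n : ℕ}

theorem jordanReverser_blockTriangular (c : ℂ) : (jordanReverser c n).BlockTriangular id :=
  ((blockTriangular_diagonal _).mul signedPascal_blockTriangular).mul (blockTriangular_diagonal _)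

theorem jordanReverser_mul_map_conj {c : ℂ} (hc : c * starRingEnd ℂ c = 1) :
    jordanReverser c n * (jordanReverser c n).map (starRingEnd ℂ) = 1 := by
  set D := diagonal (fun i : Fin n => c ^ (i : ℕ))
  have hD : D * D.map (starRingEnd ℂ) = 1 := by
    simp only [D, diagonal_map (map_zero _), map_pow, diagonal_mul_diagonal, ← mul_pow, hc,
      one_pow, diagonal_one]
  calc D * signedPascal ℂ n * D * (D * signedPascal ℂ n * D).map (starRingEnd ℂ)
      = D * signedPascal ℂ n * (D * D.map (starRingEnd ℂ)) * signedPascal ℂ n *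
          D.map (starRingEnd ℂ) := by
        simp only [Matrix.map_mul, signedPascal_map, Matrix.mul_assoc]
    _ = 1 := by
        rw [hD, Matrix.mul_one, Matrix.mul_assoc D, signedPascal_mul_self, Matrix.mul_one, hD]

theorem jordanBlock_mul_jordanReverser_mul_jordanBlock {c a : ℂ} (hca : c * a = 1) :
    jordanBlock c n * jordanReverser c n * jordanBlock a n = jordanReverser c n := by
  set D := diagonal (fun i : Fin n => c ^ (i : ℕ))
  have hleft : jordanBlock c n * D = c • (D * jordanBlock 1 n) := by
    simpa using jordanBlock_mul_diagonal_pow c 1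
  have hright : D * jordanBlock a n = a • (jordanBlock 1 n * D) := by
    rw [← hca, jordanBlock_mul_diagonal_pow, smul_smul, mul_comm a c, hca, one_smul]
  calc jordanBlock c n * (D * signedPascal ℂ n * D) * jordanBlock a n
      = (jordanBlock c n * D) * signedPascal ℂ n * (D * jordanBlock a n) := by
        simp only [Matrix.mul_assoc]
    _ = (c * a) • (D * (jordanBlock 1 n * signedPascal ℂ n * jordanBlock 1 n) * D) := by
        rw [hleft, hright]
        simp only [Matrix.smul_mul, Matrix.mul_smul, smul_smul, Matrix.mul_assoc, mul_comm a c]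
    _ = D * signedPascal ℂ n * D := by
        rw [hca, one_smul, jordanBlock_one_mul_signedPascal_mul_jordanBlock_one]

end jordanReverser

/-- Every Jordan block `J(λ, n)` with `|λ| = 1` is strongly c-reversible:
there is an upper triangular `B` with `B * conj B = I` and
`B J(λ,n) B⁻¹ = (conj J(λ,n))⁻¹`. -/
theorem jordanBlock_unit_modulus_strongly_c_reversible (n : ℕ) (lam : ℂ)
    (hlam : ‖lam‖ = 1) :
    ∃ B : Matrix (Fin n) (Fin n) ℂ, IsUnit B ∧
      B.BlockTriangular id ∧
      B * B.map (starRingEnd ℂ) = 1 ∧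
      B * jordanBlock lam n * B⁻¹ = ((jordanBlock lam n).map (starRingEnd ℂ))⁻¹ := by
  set μ := starRingEnd ℂ lam
  have hlamμ : lam * μ = 1 := by simp [μ, Complex.mul_conj', hlam]
  set B := jordanReverser μ n
  have hBconj : B * B.map (starRingEnd ℂ) = 1 :=
    jordanReverser_mul_map_conj (by rwa [Complex.conj_conj, mul_comm])
  have hdet : IsUnit B.det := isUnit_det_of_right_inverse hBconj
  refine ⟨B, (isUnit_iff_isUnit_det B).2 hdet, jordanReverser_blockTriangular μ, hBconj, ?_⟩
  rw [jordanBlock_map, eq_comm]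
  apply inv_eq_right_inv
  calc jordanBlock μ n * (B * jordanBlock lam n * B⁻¹)
      = (jordanBlock μ n * B * jordanBlock lam n) * B⁻¹ := by simp only [Matrix.mul_assoc]
    _ = 1 := by
        rw [jordanBlock_mul_jordanReverser_mul_jordanBlock (by rwa [mul_comm]),
          mul_nonsing_inv B hdet]
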